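/- Let P be a subset of an ordered normed space X and G : P → P an increasing mapping (x ≤ y implies Gx ≤ Gy). If the image G(P) has an upper bound in P and every decreasing sequence in G(P) converges weakly to an element of P, then G has a greatest fixed point x* ∈ P, and x* = max{x ∈ P : x ≤ Gx}. -/

import Mathlib

noncomputable section
open Set Filter Topology Ordinal Cardinal

namespace CHFix

abbrev omega1 : Ordinal.{0} := (Cardinal.aleph 1).ord

lemma omega1_isLimit : Order.IsSuccLimit omega1 := Cardinal.isSuccLimit_ord (Cardinal.aleph0_le_aleph 1)

lemma succ_lt_omega1 {a : Ordinal} (h : a < omega1) : a + 1 < omega1 := by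
  rw [Ordinal.add_one_eq_succ]
  exact omega1_isLimit.succ_lt h

lemma iSup_lt_omega1 (f : ℕ → Ordinal.{0}) (h : ∀ n, f n < omega1) : iSup f < omega1 :=
  by rw [omega1, Cardinal.ord_aleph] at *; exact Ordinal.iSup_lt_omega_one h

lemma le_iSup_nat (f : ℕ → Ordinal.{0}) (n : ℕ) : f n ≤ iSup f :=
  le_ciSup (Ordinal.bddAbove_range f) n

lemma lt_iSup_nat {f : ℕ → Ordinal.{0}} {b : Ordinal} :
    b < iSup f ↔ ∃ n, b < f n :=
  lt_ciSup_iff (Ordinal.bddAbove_range f)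

/-- sup of a cofinal (strict mono index) subsequence equals sup. -/
lemma iSup_comp_eq {f : ℕ → Ordinal.{0}} (hf : Monotone f) {φ : ℕ → ℕ} (hφ : ∀ n, n ≤ φ n) :
    iSup (f ∘ φ) = iSup f := by
  apply le_antisymm
  · exact ciSup_le fun n => le_iSup_nat f (φ n)
  · exact ciSup_le fun n => le_trans (hf (hφ n)) (le_iSup_nat (f ∘ φ) n)

lemma isLimit_iSup {f : ℕ → Ordinal.{0}} (hf : StrictMono f) : Order.IsSuccLimit (iSup f) := by
  rw [Ordinal.isSuccLimit_iff, Order.isSuccPrelimit_iff_succ_lt]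
  constructor
  · intro h0
    have h1 : f 0 < iSup f := lt_of_lt_of_le (hf Nat.zero_lt_one) (le_iSup_nat f 1)
    rw [h0] at h1
    exact (not_lt_of_ge zero_le h1)
  · intro a ha
    obtain ⟨n, hn⟩ := lt_iSup_nat.mp ha
    calc Order.succ a ≤ f n := Order.succ_le_of_lt hn
      _ < f (n+1) := hf (Nat.lt_succ_self n)
      _ ≤ iSup f := le_iSup_nat f (n+1)

/-- clubs in `ω₁`, with closure only under countable increasing suprema. -/
def Club (D : Set Ordinal.{0}) : Prop :=
  (∀ ⦃a⦄, a ∈ D → a < omega1) ∧ (∀ a < omega1, ∃ b ∈ D, a < b) ∧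
    (∀ f : ℕ → Ordinal.{0}, StrictMono f → (∀ n, f n ∈ D) → iSup f ∈ D)

def Stationary (S : Set Ordinal.{0}) : Prop := ∀ D, Club D → (S ∩ D).Nonempty

lemma club_Iio_omega1 : Club (Iio omega1) :=
  ⟨fun _ h => h, fun a ha => ⟨a + 1, succ_lt_omega1 ha, lt_add_one a⟩,
    fun f _ hf => iSup_lt_omega1 f hf⟩

lemma club_limits : Club {b | Order.IsSuccLimit b ∧ b < omega1} := by
  refine ⟨fun a h => h.2, fun a ha => ?_, fun f hm hf => ⟨isLimit_iSup hm, iSup_lt_omega1 f fun n => (hf n).2⟩⟩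
  refine ⟨a + Ordinal.omega0, ⟨Ordinal.isSuccLimit_add a Ordinal.isSuccLimit_omega0, ?_⟩, ?_⟩
  · rw [Cardinal.lt_ord, Ordinal.card_add, Ordinal.card_omega0]
    exact Cardinal.add_lt_of_lt (Cardinal.aleph0_le_aleph 1)
      (Cardinal.lt_ord.mp ha) Cardinal.aleph0_lt_aleph_one
  · exact lt_of_eq_of_lt (add_zero a).symm ((add_lt_add_iff_left a).mpr Ordinal.omega0_pos)



lemma club_Ioi {c : Ordinal.{0}} (hc : c < omega1) : Club {b | c < b ∧ b < omega1} := by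
  refine ⟨fun a h => h.2, fun a ha => ?_, fun f hm hf => ?_⟩
  · exact ⟨max c a + 1, ⟨lt_of_le_of_lt (le_max_left c a) (lt_add_one _),
      succ_lt_omega1 (max_lt hc ha)⟩, lt_of_le_of_lt (le_max_right c a) (lt_add_one _)⟩
  · exact ⟨lt_of_lt_of_le (hf 0).1 (le_iSup_nat f 0), iSup_lt_omega1 f fun n => (hf n).2⟩

lemma countable_Iio {c : Ordinal.{0}} (hc : c < omega1) : (Iio c).Countable := by
  rw [Cardinal.countable_iff_lt_aleph_one, Ordinal.mk_Iio_ordinal]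
  have h1 : c.card < Cardinal.aleph 1 := Cardinal.lt_ord.mp hc
  have h2 : Cardinal.lift.{1} c.card < Cardinal.lift.{1} (Cardinal.aleph 1) :=
    Cardinal.lift_lt.mpr h1
  rwa [Cardinal.lift_aleph, Ordinal.lift_one] at h2

lemma club_iInterNat (D : ℕ → Set Ordinal.{0}) (hD : ∀ n, Club (D n)) :
    Club (⋂ n, D n) := by
  refine ⟨fun a ha => (hD 0).1 (mem_iInter.mp ha 0), ?_, ?_⟩
  · intro a ha
    have H : ∀ (n : ℕ) (x : Ordinal), x < omega1 → ∃ b, b ∈ D n ∧ x < b := by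
      intro n x hx
      obtain ⟨b, hb1, hb2⟩ := (hD n).2.1 x hx
      exact ⟨b, hb1, hb2⟩
    choose F hF1 hF2 using H
    let g : ℕ → {o : Ordinal.{0} // o < omega1} :=
      Nat.rec ⟨a, ha⟩ (fun k p => ⟨F k.unpair.1 p.1 p.2, (hD k.unpair.1).1 (hF1 k.unpair.1 p.1 p.2)⟩)
    have hgs : StrictMono (fun n => (g n).1) := by
      apply strictMono_nat_of_lt_succ
      intro n
      exact hF2 n.unpair.1 (g n).1 (g n).2
    set s := iSup (fun n => (g n).1) with hs
    have hmem : ∀ m, s ∈ D m := by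
      intro m
      have key : (fun n => (g n).1) ∘ (fun j => Nat.pair m j + 1) =
          fun j => (g (Nat.pair m j + 1)).1 := rfl
      have hsub : iSup (fun j => (g (Nat.pair m j + 1)).1) = s := by
        rw [← key]
        exact iSup_comp_eq hgs.monotone fun j => Nat.le_succ_of_le (Nat.right_le_pair m j)
      rw [← hsub]
      apply (hD m).2.2
      · intro j1 j2 hj
        exact hgs (Nat.succ_lt_succ (Nat.pair_lt_pair_right m hj))
      · intro j
        have : (g (Nat.pair m j + 1)).1 ∈ D (Nat.pair m j).unpair.1 :=
          hF1 (Nat.pair m j).unpair.1 (g (Nat.pair m j)).1 (g (Nat.pair m j)).2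
        rwa [Nat.unpair_pair] at this
    refine ⟨s, mem_iInter.mpr hmem, ?_⟩
    calc a = (g 0).1 := rfl
      _ < (g 1).1 := hgs Nat.zero_lt_one
      _ ≤ s := le_iSup_nat _ 1
  · intro f hm hf
    exact mem_iInter.mpr fun m => (hD m).2.2 f hm fun n => mem_iInter.mp (hf n) m

def diagInter (D : Ordinal.{0} → Set Ordinal.{0}) : Set Ordinal.{0} :=
  {c | c < omega1 ∧ ∀ b < c, c ∈ D b}

lemma club_E (D : Ordinal.{0} → Set Ordinal.{0}) (hD : ∀ b, b < omega1 → Club (D b))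
    {c : Ordinal.{0}} (hc : c < omega1) :
    Club (Iio omega1 ∩ ⋂ b ∈ Iio c, D b) := by
  rcases eq_or_ne c 0 with rfl | hc0
  · have : Iio omega1 ∩ ⋂ b ∈ Iio (0:Ordinal), D b = Iio omega1 := by
      simp [Iio, not_lt_zero']
    rw [this]; exact club_Iio_omega1
  · have hne : (Iio c).Nonempty := ⟨0, pos_iff_ne_zero.mpr hc0⟩
    obtain ⟨e, he⟩ := (countable_Iio hc).exists_eq_range hne
    have heq : Iio omega1 ∩ ⋂ b ∈ Iio c, D b = ⋂ n, D (e n) := by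
      apply Set.eq_of_subset_of_subset
      · intro x hx
        refine mem_iInter.mpr fun n => ?_
        have : e n ∈ Iio c := he ▸ mem_range_self n
        exact (mem_iInter₂.mp hx.2) (e n) this
      · intro x hx
        have hx0 : x ∈ D (e 0) := mem_iInter.mp hx 0
        have he0 : e 0 ∈ Iio c := he ▸ mem_range_self 0
        refine ⟨(hD (e 0) (lt_trans he0 hc)).1 hx0, mem_iInter₂.mpr fun b hb => ?_⟩
        have : b ∈ range e := he ▸ hb
        obtain ⟨n, rfl⟩ := this
        exact mem_iInter.mp hx n
    rw [heq]
    refine club_iInterNat _ fun n => ?_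
    have : e n ∈ Iio c := he ▸ mem_range_self n
    exact hD (e n) (lt_trans this hc)

lemma club_diag (D : Ordinal.{0} → Set Ordinal.{0}) (hD : ∀ b, b < omega1 → Club (D b)) :
    Club (diagInter D) := by
  refine ⟨fun a h => h.1, ?_, ?_⟩
  · intro a ha
    have HE : ∀ x : {o : Ordinal.{0} // o < omega1},
        ∃ b, b ∈ Iio omega1 ∩ ⋂ b' ∈ Iio (x.1 + 1), D b' ∧ x.1 < b := by
      intro x
      obtain ⟨b, hb1, hb2⟩ := (club_E D hD (succ_lt_omega1 x.2)).2.1 x.1 x.2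
      exact ⟨b, hb1, hb2⟩
    choose F hF1 hF2 using HE
    let g : ℕ → {o : Ordinal.{0} // o < omega1} :=
      Nat.rec ⟨a, ha⟩ (fun _ p => ⟨F p, (hF1 p).1⟩)
    have hgs : StrictMono (fun n => (g n).1) := strictMono_nat_of_lt_succ fun n => hF2 (g n)
    set s := iSup (fun n => (g n).1) with hs
    have hslt : s < omega1 := iSup_lt_omega1 _ fun n => (g n).2
    have hsd : s ∈ diagInter D := by
      refine ⟨hslt, fun b hb => ?_⟩
      obtain ⟨n₀, hn₀⟩ := lt_iSup_nat.mp hb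
      have key : (fun n => (g n).1) ∘ (fun j => n₀ + 1 + j) = fun j => (g (n₀ + 1 + j)).1 := rfl
      have hsub : iSup (fun j => (g (n₀ + 1 + j)).1) = s := by
        rw [← key]
        exact iSup_comp_eq hgs.monotone fun j => by omega
      rw [← hsub]
      apply (hD b (lt_trans hb hslt)).2.2
      · intro j1 j2 hj
        exact hgs (by omega)
      · intro j
        have h1 : (g (n₀ + j + 1)).1 ∈ Iio omega1 ∩ ⋂ b' ∈ Iio ((g (n₀ + j)).1 + 1), D b' :=
          hF1 (g (n₀ + j))
        have h2 : b ∈ Iio ((g (n₀ + j)).1 + 1) := by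
          have : b < (g n₀).1 + 1 := lt_trans hn₀ (lt_add_one _)
          have hmono : (g n₀).1 ≤ (g (n₀ + j)).1 := hgs.monotone (Nat.le_add_right n₀ j)
          calc b < (g n₀).1 + 1 := this
            _ ≤ (g (n₀ + j)).1 + 1 := by
              exact add_le_add_left hmono 1
        have := (mem_iInter₂.mp h1.2) b h2
        have heqidx : n₀ + 1 + j = n₀ + j + 1 := by omega
        rw [heqidx]
        exact this
    refine ⟨s, hsd, ?_⟩
    calc a = (g 0).1 := rfl
      _ < (g 1).1 := hgs Nat.zero_lt_one
      _ ≤ s := le_iSup_nat _ 1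
  · intro f hm hf
    set s := iSup f with hs
    have hslt : s < omega1 := iSup_lt_omega1 f fun n => (hf n).1
    refine ⟨hslt, fun b hb => ?_⟩
    obtain ⟨n₀, hn₀⟩ := lt_iSup_nat.mp hb
    have key : f ∘ (fun j => n₀ + 1 + j) = fun j => f (n₀ + 1 + j) := rfl
    have hsub : iSup (fun j => f (n₀ + 1 + j)) = s := by
      rw [← key]
      exact iSup_comp_eq hm.monotone fun j => by omega
    rw [← hsub]
    apply (hD b (lt_trans hb hslt)).2.2
    · intro j1 j2 hj
      exact hm (by omega)
    · intro j
      exact (hf (n₀ + 1 + j)).2 b (lt_trans hn₀ (hm (by omega)))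

lemma fodor {S : Set Ordinal.{0}} (hS : Stationary S) (r : Ordinal.{0} → Ordinal.{0})
    (hr : ∀ l ∈ S, r l < l) : ∃ b, Stationary {l | l ∈ S ∧ r l = b} := by
  by_contra h
  push_neg at h
  have h' : ∀ b, ∃ D, Club D ∧ {l | l ∈ S ∧ r l = b} ∩ D = ∅ := by
    intro b
    have := h b
    rw [Stationary] at this
    push_neg at this
    obtain ⟨D, hD, hDne⟩ := this
    exact ⟨D, hD, hDne⟩
  choose D hD1 hD2 using h'
  obtain ⟨l, hlS, hld⟩ := hS (diagInter D) (club_diag D fun b _ => hD1 b)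
  have h1 : l ∈ D (r l) := hld.2 (r l) (hr l hlS)
  have h2 : l ∈ {x | x ∈ S ∧ r x = r l} ∩ D (r l) := ⟨⟨hlS, rfl⟩, h1⟩
  rw [hD2 (r l)] at h2
  exact h2

lemma exists_stationary_cover {S : Set Ordinal.{0}} (hS : Stationary S)
    (A : ℕ → Set Ordinal.{0}) (hcov : S ⊆ ⋃ n, A n) : ∃ n, Stationary (S ∩ A n) := by
  by_contra h
  push_neg at h
  have h' : ∀ n, ∃ D, Club D ∧ (S ∩ A n) ∩ D = ∅ := by
    intro n
    have := h n
    rw [Stationary] at this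
    push_neg at this
    obtain ⟨D, hD, hDne⟩ := this
    exact ⟨D, hD, hDne⟩
  choose D hD1 hD2 using h'
  obtain ⟨l, hlS, hld⟩ := hS (⋂ n, D n) (club_iInterNat D hD1)
  obtain ⟨_, ⟨n, rfl⟩, hn⟩ := hcov hlS
  have : l ∈ (S ∩ A n) ∩ D n := ⟨⟨hlS, hn⟩, mem_iInter.mp hld n⟩
  rw [hD2 n] at this
  exact this

lemma Stationary.not_countable {S : Set Ordinal.{0}} (hS : Stationary S)
    (hsub : S ⊆ Iio omega1) : ¬ S.Countable := by
  intro hc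
  obtain ⟨f, hf⟩ := Set.countable_iff_exists_subset_range.mp hc
  set f' : ℕ → Ordinal.{0} := fun n => if f n < omega1 then f n else 0 with hf'
  have hflt : ∀ n, f' n < omega1 := by
    intro n
    rw [hf']
    dsimp only
    split_ifs with h
    · exact h
    · exact omega1_isLimit.pos
  set c := iSup f' with hc'
  have hclt : c < omega1 := iSup_lt_omega1 f' hflt
  obtain ⟨l, hlS, hlc⟩ := hS _ (club_Ioi hclt)
  obtain ⟨n, rfl⟩ := hf hlS
  have hlt : f n < omega1 := hsub hlS
  have : f n ≤ c := by
    have heq : f' n = f n := by rw [hf']; dsimp only; rw [if_pos hlt]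
    rw [← heq]
    exact le_iSup_nat f' n
  exact absurd hlc.1 (not_lt.mpr this)



lemma exists_cofinal_seq {c : Ordinal.{0}} (h1 : Order.IsSuccLimit c) (h2 : c < omega1) :
    ∃ g : ℕ → Ordinal.{0}, StrictMono g ∧ (∀ n, g n < c) ∧ ∀ b < c, ∃ n, b < g n := by
  obtain ⟨e, he⟩ := Set.countable_iff_exists_subset_range.mp (countable_Iio h2)
  set e' : ℕ → Ordinal.{0} := fun n => if e n < c then e n else 0 with he'
  have he'lt : ∀ n, e' n < c := by
    intro n
    rw [he']; dsimp only; split_ifs with h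
    · exact h
    · exact h1.pos
  have hsucclt : ∀ b, b < c → b + 1 < c := by
    intro b hb
    rw [Ordinal.add_one_eq_succ]
    exact h1.succ_lt hb
  set g : ℕ → Ordinal.{0} := Nat.rec (e' 0 + 1) (fun k gk => max gk (e' (k+1)) + 1) with hg
  have hglt : ∀ n, g n < c := by
    intro n
    induction n with
    | zero => exact hsucclt _ (he'lt 0)
    | succ k ih => exact hsucclt _ (max_lt ih (he'lt (k+1)))
  have hgmono : StrictMono g := by
    apply strictMono_nat_of_lt_succ
    intro n
    exact lt_of_le_of_lt (le_max_left _ _) (lt_add_one _)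
  refine ⟨g, hgmono, hglt, ?_⟩
  intro b hb
  obtain ⟨m, hm⟩ := he (show b ∈ Iio c from hb)
  have he'm : e' m = b := by rw [he']; dsimp only; rw [hm]; rw [if_pos (hm ▸ hb)]
  cases m with
  | zero => exact ⟨0, he'm ▸ lt_add_one _⟩
  | succ k =>
    refine ⟨k + 1, ?_⟩
    calc b = e' (k+1) := he'm.symm
      _ ≤ max (g k) (e' (k+1)) := le_max_right _ _
      _ < g (k+1) := lt_add_one _

lemma pigeon {α β : Type*} {S : Set α} (hS : ¬ S.Countable) (f : α → β) {Q : Set β}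
    (hQ : Q.Countable) (hf : ∀ o ∈ S, f o ∈ Q) : ∃ t, ¬ {o | o ∈ S ∧ f o = t}.Countable := by
  by_contra h
  push_neg at h
  apply hS
  have hsub : S ⊆ ⋃ t ∈ Q, {o | o ∈ S ∧ f o = t} := fun o ho => mem_biUnion (hf o ho) ⟨ho, rfl⟩
  exact Set.Countable.mono hsub (hQ.biUnion fun t _ => h t)

section Weak

variable {X : Type*} [NormedAddCommGroup X] [NormedSpace ℝ X]

lemma weak_eval {u : ℕ → X} {l : X}
    (h : Tendsto (fun n => toWeakSpace ℝ X (u n)) atTop (𝓝 (toWeakSpace ℝ X l)))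
    (f : X →L[ℝ] ℝ) : Tendsto (fun n => f (u n)) atTop (𝓝 (f l)) := by
  have hc : Continuous fun x : WeakSpace ℝ X => (topDualPairing ℝ X).flip x f :=
    WeakBilin.eval_continuous _ f
  exact (hc.tendsto _).comp h

lemma mem_of_weak_lim {C : Set X} (hCc : IsClosed C) (hCv : Convex ℝ C)
    {v : ℕ → X} {w : X} (hm : ∀ n, v n ∈ C)
    (h : ∀ f : X →L[ℝ] ℝ, Tendsto (fun n => f (v n)) atTop (𝓝 (f w))) : w ∈ C := by
  by_contra hw
  obtain ⟨f, u, hfu, hul⟩ := geometric_hahn_banach_closed_point hCv hCc hw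
  have : f w ≤ u := le_of_tendsto (h f) (Eventually.of_forall fun n => (hfu _ (hm n)).le)
  linarith

lemma mem_closure_convexHull_of_weak {s : Set X} {v : ℕ → X} {w : X} (hm : ∀ n, v n ∈ s)
    (h : ∀ f : X →L[ℝ] ℝ, Tendsto (fun n => f (v n)) atTop (𝓝 (f w))) :
    w ∈ closure (convexHull ℝ s) := by
  by_contra hw
  obtain ⟨f, u, hfu, hul⟩ := geometric_hahn_banach_closed_point
    ((convex_convexHull ℝ s).closure) isClosed_closure hw
  have h1 : ∀ n, f (v n) < u := fun n => hfu _ (subset_closure (subset_convexHull ℝ s (hm n)))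
  have : f w ≤ u := le_of_tendsto (h f) (Eventually.of_forall fun n => (h1 n).le)
  linarith

end Weak



lemma club_inter {D E : Set Ordinal.{0}} (hD : Club D) (hE : Club E) : Club (D ∩ E) := by
  have h : (⋂ n : ℕ, (if n = 0 then D else E)) = D ∩ E := by
    apply Set.eq_of_subset_of_subset
    · intro z hz
      have h0 := mem_iInter.mp hz 0
      have h1 := mem_iInter.mp hz 1
      simp only [if_pos rfl] at h0
      simp only [Nat.one_ne_zero, if_false] at h1
      exact ⟨h0, h1⟩
    · intro z hz
      refine mem_iInter.mpr fun n => ?_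
      by_cases hn : n = 0 <;> simp [hn, hz.1, hz.2]
  rw [← h]
  refine club_iInterNat _ fun n => ?_
  by_cases hn : n = 0 <;> simp [hn, hD, hE]

end CHFix

open CHFix Set Filter Topology

/-- Carl–Heikkilä fixed point theorem: an increasing map on a subset of an ordered
normed space (order induced by a closed convex cone), whose image has an upper bound
and whose decreasing image-sequences converge weakly in `P`, has a greatest fixed
point `x* = max {x ∈ P : x ≤ G x}`. -/
theorem increasing_map_greatest_fixed_point
    {X : Type*} [NormedAddCommGroup X] [NormedSpace ℝ X] [PartialOrder X]
    (C : Set X) (hCclosed : IsClosed C) (hCconv : Convex ℝ C)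
    (hCcone : ∀ x ∈ C, ∀ c : ℝ, 0 ≤ c → c • x ∈ C)
    (horder : ∀ x y : X, x ≤ y ↔ y - x ∈ C)
    (P : Set X) (G : X → X) (hGP : ∀ x ∈ P, G x ∈ P)
    (hGmono : ∀ x ∈ P, ∀ y ∈ P, x ≤ y → G x ≤ G y)
    (hbound : ∃ b ∈ P, ∀ x ∈ P, G x ≤ b)
    (hweak : ∀ u : ℕ → X, (∀ n, u n ∈ G '' P) → Antitone u →
      ∃ l ∈ P, Filter.Tendsto (fun n => toWeakSpace ℝ X (u n)) Filter.atTop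
        (nhds (toWeakSpace ℝ X l))) :
    ∃ xstar, IsGreatest {x | x ∈ P ∧ x ≤ G x} xstar ∧ G xstar = xstar ∧
      ∀ x ∈ P, G x = x → x ≤ xstar := by
  classical
  obtain ⟨b, hbP, hbub⟩ := hbound
  have hsec : ∀ w : X, IsClosed {z : X | z ≤ w} := by
    intro w
    have hset : {z : X | z ≤ w} = (fun z => w - z) ⁻¹' C := by
      ext z; exact horder z w
    rw [hset]; exact hCclosed.preimage (continuous_const.sub continuous_id)
  set lim : ∀ o : Ordinal.{0}, Order.IsSuccLimit o → (∀ b' < o, X) → X := fun o _ ih =>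
    if h : ∃ l : X, l ∈ P ∧ IsGLB {z | ∃ b', ∃ hb : b' < o, ih b' hb = z} l ∧
        ∃ v : ℕ → X, (∀ n, v n ∈ {z | ∃ b', ∃ hb : b' < o, ih b' hb = z}) ∧
          Filter.Tendsto (fun n => toWeakSpace ℝ X (v n)) Filter.atTop
            (nhds (toWeakSpace ℝ X l))
    then h.choose else b with hlim
  set x : Ordinal.{0} → X := fun o => Ordinal.limitRecOn o b (fun _ ih => G ih) lim with hxdef
  have hx0 : x 0 = b := Ordinal.limitRecOn_zero _ _ _
  have hxs : ∀ o, x (o + 1) = G (x o) := by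
    intro o
    rw [hxdef]
    dsimp only
    rw [Ordinal.add_one_eq_succ, Ordinal.limitRecOn_succ]
  have hxl : ∀ o (ho : Order.IsSuccLimit o), x o = lim o ho (fun b' _ => x b') := by
    intro o ho
    rw [hxdef]
    dsimp only
    rw [Ordinal.limitRecOn_limit _ _ _ _ ho]
  set S : Set X := {z | z ∈ P ∧ z ≤ G z} with hS
  set Good : Ordinal.{0} → Prop := fun o =>
    x o ∈ P ∧ G (x o) ≤ x o ∧ (∀ s ∈ S, s ≤ x o) ∧ (∀ b' < o, x o ≤ x b') ∧
      (Order.IsSuccLimit o → IsGLB (x '' Iio o) (x o) ∧ x o ∈ closure (convexHull ℝ (x '' Iio o)))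
    with hGoodDef
  have hGood : ∀ o : Ordinal.{0}, o < omega1 → Good o := by
    intro o
    induction o using Ordinal.induction with
    | _ o IH =>
    intro ho
    rcases Ordinal.zero_or_succ_or_isSuccLimit o with h0 | ⟨p, hp⟩ | hl
    · subst h0
      refine ⟨hx0 ▸ hbP, ?_, ?_, ?_, ?_⟩
      · rw [hx0]; exact hbub b hbP
      · intro s hs; rw [hx0]; exact le_trans hs.2 (hbub s hs.1)
      · intro b' hb'; exact absurd hb' not_lt_zero
      · intro h; exact absurd rfl h.ne_zero
    · subst hp
      have hps : p < Order.succ p := Order.lt_succ_of_not_isMax (not_isMax p)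
      have hp1 : p < omega1 := lt_trans hps ho
      have IHp := IH p hps hp1
      have hsp : x (Order.succ p) = G (x p) := by
        rw [← Ordinal.add_one_eq_succ]; exact hxs p
      refine ⟨hsp ▸ hGP _ IHp.1, ?_, ?_, ?_, ?_⟩
      · rw [hsp]; exact hGmono _ (hGP _ IHp.1) _ IHp.1 IHp.2.1
      · intro s hs
        rw [hsp]
        exact le_trans hs.2 (hGmono s hs.1 (x p) IHp.1 (IHp.2.2.1 s hs))
      · intro b' hb'
        rcases (Order.lt_succ_iff.mp hb').lt_or_eq with hlt | rfl
        · exact le_trans (by rw [hsp]; exact IHp.2.1) (IHp.2.2.2.1 b' hlt)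
        · rw [hsp]; exact IHp.2.1
      · intro h
        exact absurd (h.succ_lt hps) (lt_irrefl _)
    · -- limit case
      have hsucclt : ∀ b', b' < o → b' + 1 < o := fun b' hb' => by
        rw [Ordinal.add_one_eq_succ]; exact hl.succ_lt hb'
      obtain ⟨g, hgsm, hglt, hgcof⟩ := exists_cofinal_seq hl ho
      have hPmem : ∀ b', b' < o → x b' ∈ P := fun b' hb' => (IH b' hb' (lt_trans hb' ho)).1
      have hant : ∀ b1 b2, b1 ≤ b2 → b2 < o → x b2 ≤ x b1 := by
        intro b1 b2 h12 h2
        rcases eq_or_lt_of_le h12 with rfl | hlt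
        · exact le_refl _
        · exact (IH b2 h2 (lt_trans h2 ho)).2.2.2.1 b1 hlt
      set u : ℕ → X := fun n => x (g n + 1) with hu
      have hu_mem : ∀ n, u n ∈ G '' P := fun n => ⟨x (g n), hPmem _ (hglt n), (hxs (g n)).symm⟩
      have hu_ant : Antitone u := by
        intro m n hmn
        exact hant (g m + 1) (g n + 1) (add_le_add_left (hgsm.monotone hmn) 1)
          (hsucclt _ (hglt n))
      obtain ⟨l, hlP, hlt⟩ := hweak u hu_mem hu_ant
      have hev := fun f => CHFix.weak_eval hlt f
      have hl_le_u : ∀ n, l ≤ u n := by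
        intro n
        rw [horder]
        apply CHFix.mem_of_weak_lim hCclosed hCconv (v := fun m => u n - u (m + n))
        · intro m
          rw [← horder]
          exact hu_ant (Nat.le_add_left n m)
        · intro f
          simp only [map_sub]
          exact Filter.Tendsto.const_sub _ ((hev f).comp (Filter.tendsto_add_atTop_nat n))
      have hl_lb : ∀ b' ∈ Iio o, l ≤ x b' := by
        intro b' hb'
        obtain ⟨n, hn⟩ := hgcof b' hb'
        exact le_trans (hl_le_u n)
          (hant b' (g n + 1) (le_trans hn.le le_self_add) (hsucclt _ (hglt n)))
      have hglb : IsGLB (x '' Iio o) l := by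
        constructor
        · rintro z ⟨b', hb', rfl⟩
          exact hl_lb b' hb'
        · intro z hz
          rw [horder]
          apply CHFix.mem_of_weak_lim hCclosed hCconv (v := fun n => u n - z)
          · intro n
            rw [← horder]
            exact hz ⟨g n + 1, hsucclt _ (hglt n), rfl⟩
          · intro f
            simp only [map_sub]
            exact Filter.Tendsto.sub_const (hev f) _
      have hsetEq : {z | ∃ b', ∃ _ : b' < o, x b' = z} = x '' Iio o := by
        ext z
        constructor
        · rintro ⟨b', hb', rfl⟩; exact ⟨b', hb', rfl⟩
        · rintro ⟨b', hb', rfl⟩; exact ⟨b', hb', rfl⟩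
      have hcond : ∃ l' : X, l' ∈ P ∧ IsGLB {z | ∃ b', ∃ _ : b' < o, x b' = z} l' ∧
          ∃ v : ℕ → X, (∀ n, v n ∈ {z | ∃ b', ∃ _ : b' < o, x b' = z}) ∧
            Filter.Tendsto (fun n => toWeakSpace ℝ X (v n)) Filter.atTop
              (nhds (toWeakSpace ℝ X l')) := by
        refine ⟨l, hlP, ?_, u, ?_, hlt⟩
        · rw [hsetEq]; exact hglb
        · intro n; exact ⟨g n + 1, hsucclt _ (hglt n), rfl⟩
      have hxo : x o = hcond.choose := by
        rw [hxl o hl, hlim]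
        dsimp only
        rw [dif_pos hcond]
      have hspec := hcond.choose_spec
      rw [← hxo] at hspec
      obtain ⟨hxoP, hxoglb, v, hv_mem, hv_t⟩ := hspec
      rw [hsetEq] at hxoglb
      refine ⟨hxoP, ?_, ?_, ?_, fun _ => ⟨hxoglb, ?_⟩⟩
      · apply hxoglb.2
        rintro z ⟨b', hb', rfl⟩
        have h1 : x o ≤ x b' := hxoglb.1 ⟨b', hb', rfl⟩
        exact le_trans (hGmono _ hxoP _ (hPmem b' hb') h1) (IH b' hb' (lt_trans hb' ho)).2.1
      · intro s hs
        apply hxoglb.2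
        rintro z ⟨b', hb', rfl⟩
        exact (IH b' hb' (lt_trans hb' ho)).2.2.1 s hs
      · intro b' hb'
        exact hxoglb.1 ⟨b', hb', rfl⟩
      · refine CHFix.mem_closure_convexHull_of_weak (fun n => ?_) (fun f => CHFix.weak_eval hv_t f)
        rw [← hsetEq]
        exact hv_mem n
  have hfix : ∃ o, o < omega1 ∧ G (x o) = x o := by
    by_contra hnofix
    push_neg at hnofix
    set d : Ordinal.{0} → ℝ := fun o => Metric.infDist (x o) {z | z ≤ x (o + 1)} with hd
    have hdpos : ∀ o, Order.IsSuccLimit o → o < omega1 → 0 < d o := by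
      intro o hlo ho
      have hne : {z | z ≤ x (o + 1)}.Nonempty := ⟨x (o + 1), le_refl _⟩
      rw [hd]
      dsimp only
      rw [← IsClosed.notMem_iff_infDist_pos (hsec (x (o + 1))) hne]
      intro hmem
      have h1 : x (o + 1) ≤ x o := (hGood (o + 1) (succ_lt_omega1 ho)).2.2.2.1 o (lt_add_one o)
      have h2 : x (o + 1) = x o := le_antisymm h1 hmem
      rw [hxs o] at h2
      exact hnofix o ho h2
    set Lim : Set Ordinal.{0} := {b' | Order.IsSuccLimit b' ∧ b' < omega1} with hLim
    have hLstat : Stationary Lim := by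
      intro D hD
      obtain ⟨b', hb'1, _⟩ := (club_inter club_limits hD).2.1 0 omega1_isLimit.pos
      exact ⟨b', hb'1⟩
    set A : ℕ → Set Ordinal.{0} := fun n => {o | 1 / ((n : ℝ) + 1) ≤ d o} with hA
    have hcov : Lim ⊆ ⋃ n, A n := by
      intro o hoL
      obtain ⟨n, hn⟩ := exists_nat_one_div_lt (hdpos o hoL.1 hoL.2)
      exact mem_iUnion.mpr ⟨n, hn.le⟩
    obtain ⟨n₀, hstat⟩ := exists_stationary_cover hLstat A hcov
    set ε : ℝ := 1 / ((n₀ : ℝ) + 1) with hε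
    have hεpos : 0 < ε := by positivity
    set SS : Set Ordinal.{0} := Lim ∩ A n₀ with hSS
    have hSSsub : ∀ o ∈ SS, Order.IsSuccLimit o ∧ o < omega1 := fun o ho => ho.1
    have hSd : ∀ o ∈ SS, ε ≤ d o := fun o ho => ho.2
    have hsel : ∀ o, ∃ (F : Finset Ordinal.{0}) (y : X), o ∈ SS →
        ((∀ b' ∈ F, b' < o) ∧ y ∈ convexHull ℝ (x '' ↑F) ∧ dist (x o) y < ε / 4 ∧
          F.Nonempty) := by
      intro o
      by_cases hoSS : o ∈ SS
      · have hcl := ((hGood o (hSSsub o hoSS).2).2.2.2.2 (hSSsub o hoSS).1).2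
        rw [Metric.mem_closure_iff] at hcl
        obtain ⟨y, hy1, hy2⟩ := hcl (ε / 4) (by positivity)
        rw [convexHull_eq_union_convexHull_finite_subsets] at hy1
        simp only [mem_iUnion] at hy1
        obtain ⟨t, ht, hyt⟩ := hy1
        have hch : ∀ y' ∈ t, ∃ b', b' < o ∧ x b' = y' := by
          intro y' hy'
          obtain ⟨b', hb', hxb⟩ := ht hy'
          exact ⟨b', hb', hxb⟩
        choose fb hfb1 hfb2 using hch
        refine ⟨t.attach.image (fun p => fb p.1 p.2), y, fun _ => ⟨?_, ?_, hy2, ?_⟩⟩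
        · intro b' hb'
          simp only [Finset.mem_image, Finset.mem_attach, true_and] at hb'
          obtain ⟨p, hp⟩ := hb'
          exact hp ▸ hfb1 p.1 p.2
        · refine convexHull_mono ?_ hyt
          intro y' hy'
          refine ⟨fb y' hy', ?_, hfb2 y' hy'⟩
          simp only [Finset.coe_image, mem_image, Finset.mem_coe, Finset.mem_attach]
          exact ⟨⟨y', hy'⟩, by simp, rfl⟩
        · have htne : t.Nonempty := by
            rcases Finset.eq_empty_or_nonempty t with rfl | h
            · simp only [Finset.coe_empty, convexHull_empty] at hyt
              exact absurd hyt (notMem_empty y)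
            · exact h
          exact (htne.attach).image _
      · exact ⟨∅, 0, fun h => absurd h hoSS⟩
    choose F Y hFY using hsel
    set r : Ordinal.{0} → Ordinal.{0} := fun o => (F o).sup id with hr
    have hreg : ∀ o ∈ SS, r o < o := by
      intro o ho
      have h1 := (hFY o ho).1
      rw [hr]
      dsimp only
      rw [Finset.sup_lt_iff (pos_iff_ne_zero.mpr (hSSsub o ho).1.ne_zero)]
      exact fun b' hb' => h1 b' hb'
    obtain ⟨b₀, hb₀stat⟩ := fodor hstat r hreg
    set SS2 : Set Ordinal.{0} := {q | q ∈ SS ∧ r q = b₀} with hSS2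
    have hSS2sub : SS2 ⊆ Iio omega1 := fun o ho => (hSSsub o ho.1).2
    have hSS2unc : ¬ SS2.Countable := hb₀stat.not_countable hSS2sub
    obtain ⟨o₁, ho₁⟩ := hb₀stat (Iio omega1) club_Iio_omega1
    have hb₀lt : b₀ < omega1 := by
      have h1 : r o₁ < o₁ := hreg o₁ ho₁.1.1
      rw [ho₁.1.2] at h1
      exact lt_trans h1 ho₁.2
    have hIic : Iic b₀ = Iio (b₀ + 1) := by
      ext z
      simp only [mem_Iic, mem_Iio, Order.lt_add_one_iff]
    have hQc : {t : Set Ordinal.{0} | t.Finite ∧ t ⊆ Iic b₀}.Countable := by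
      apply Set.countable_setOf_finite_subset
      rw [hIic]
      exact countable_Iio (succ_lt_omega1 hb₀lt)
    have hmap : ∀ o ∈ SS2, ((F o : Set Ordinal.{0})) ∈ {t | t.Finite ∧ t ⊆ Iic b₀} := by
      intro o ho
      refine ⟨(F o).finite_toSet, fun b' hb' => ?_⟩
      have h1 : id b' ≤ (F o).sup id := Finset.le_sup hb'
      rw [show (F o).sup id = r o from rfl, ho.2] at h1
      exact h1
    obtain ⟨t₀, ht₀⟩ := pigeon hSS2unc (fun o => ((F o : Set Ordinal.{0}))) hQc hmap
    set Λ : Set Ordinal.{0} := {q | q ∈ SS2 ∧ (F q : Set Ordinal.{0}) = t₀} with hΛ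
    have hΛne : Λ.Nonempty := by
      rcases Set.eq_empty_or_nonempty Λ with h | h
      · exact absurd (h ▸ Set.countable_empty) ht₀
      · exact h
    obtain ⟨oe, hoe⟩ := hΛne
    have ht₀fin : t₀.Finite := by rw [← hoe.2]; exact (F oe).finite_toSet
    have hKcomp : IsCompact (convexHull ℝ (x '' t₀)) := (ht₀fin.image x).isCompact_convexHull ℝ
    obtain ⟨T, hTsub, hTfin, hTcov⟩ := hKcomp.finite_cover_balls (show (0:ℝ) < ε/4 by positivity)
    have hYmem : ∀ o ∈ Λ, Y o ∈ convexHull ℝ (x '' t₀) := by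
      intro o ho
      have h2 := (hFY o ho.1.1).2.1
      rw [ho.2] at h2
      exact h2
    have hselc : ∀ o, ∃ c, o ∈ Λ → (c ∈ T ∧ Y o ∈ Metric.ball c (ε/4)) := by
      intro o
      by_cases ho : o ∈ Λ
      · have := hTcov (hYmem o ho)
        simp only [mem_iUnion, exists_prop] at this
        obtain ⟨c, hc1, hc2⟩ := this
        exact ⟨c, fun _ => ⟨hc1, hc2⟩⟩
      · exact ⟨0, fun h => absurd h ho⟩
    choose cf hcf using hselc
    obtain ⟨c₀, hc₀⟩ := pigeon ht₀ cf hTfin.countable (fun o ho => (hcf o ho).1)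
    have hΛ2 : ¬ {q | q ∈ Λ ∧ cf q = c₀}.Countable := hc₀
    have h2elts : ∃ p q : Ordinal.{0}, (p ∈ Λ ∧ cf p = c₀) ∧ (q ∈ Λ ∧ cf q = c₀) ∧ p ≠ q := by
      by_contra hcon
      push_neg at hcon
      apply hΛ2
      apply Set.Subsingleton.countable
      intro p hp q hq
      exact hcon p q ⟨hp.1, hp.2⟩ ⟨hq.1, hq.2⟩
    obtain ⟨p', q', hp', hq', hpq'⟩ := h2elts
    have key : ∀ p q : Ordinal.{0}, p ∈ Λ ∧ cf p = c₀ → q ∈ Λ ∧ cf q = c₀ → p < q → False := by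
      intro p q hp hq hpq
      have hpSS : p ∈ SS := hp.1.1.1
      have hqSS : q ∈ SS := hq.1.1.1
      have hdp : dist (x p) (Y p) < ε/4 := (hFY p hpSS).2.2.1
      have hdq : dist (x q) (Y q) < ε/4 := (hFY q hqSS).2.2.1
      have hbp : dist (Y p) c₀ < ε/4 := by
        have h := (hcf p hp.1).2
        rw [hp.2] at h
        exact Metric.mem_ball.mp h
      have hbq : dist (Y q) c₀ < ε/4 := by
        have h := (hcf q hq.1).2
        rw [hq.2] at h
        exact Metric.mem_ball.mp h
      have hdist : dist (x p) (x q) < ε := by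
        have h4 : dist (x p) (x q) ≤ dist (x p) (Y p) + dist (Y p) (Y q) + dist (Y q) (x q) :=
          dist_triangle4 _ _ _ _
        have hYY : dist (Y p) (Y q) ≤ dist (Y p) c₀ + dist c₀ (Y q) := dist_triangle _ _ _
        rw [dist_comm c₀ (Y q)] at hYY
        rw [dist_comm (Y q) (x q)] at h4
        linarith
      have hq_le : x q ≤ x (p + 1) := by
        have h1 : p + 1 ≤ q := by
          rw [Ordinal.add_one_eq_succ]
          exact Order.succ_le_of_lt hpq
        rcases eq_or_lt_of_le h1 with heq | hlt'
        · rw [heq]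
        · exact (hGood q (hSSsub q hqSS).2).2.2.2.1 (p+1) hlt'
      have hd_le : d p ≤ dist (x p) (x q) := Metric.infDist_le_dist_of_mem hq_le
      have hεd : ε ≤ d p := hSd p hpSS
      linarith
    rcases hpq'.lt_or_gt with h | h
    · exact key p' q' hp' hq' h
    · exact key q' p' hq' hp' h
  obtain ⟨o, ho, hfo⟩ := hfix
  refine ⟨x o, ⟨⟨(hGood o ho).1, hfo.ge⟩, fun s hs => (hGood o ho).2.2.1 s hs⟩, hfo, ?_⟩
  intro z hz hGz
  exact (hGood o ho).2.2.1 z ⟨hz, hGz.ge⟩
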